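/- Let σ:ℝ→ℝ be a C^∞ function that is not a polynomial. Then for every compact set K ⊂ ℝ^d, the set Σ_d(σ) = span{ x ↦ σ(ω·x + b) : ω ∈ ℝ^d, b ∈ ℝ } is dense in C(K) with the uniform norm; in particular the uniform closure of Σ_d(σ) on K contains all polynomials in x₁,…,x_d. -/

import Mathlib

/-!
Let `A` be the closure of the span of the ridge functions `x ↦ σ(⟪ω, x⟫ + b)` in `C(ℝ^d, ℝ)`
with the topology of uniform convergence on compact sets. Differentiating `σ(⟪ω, x⟫ + b)` in
the coordinate `ω_i` (a limit of difference quotients, which stay in the span) shows by induction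
that `x^α σ^(|α|)(⟪ω, x⟫ + b) ∈ A` for every multi-index `α`. Since `σ` is not a polynomial,
Taylor's theorem gives for each `k` a point `b` with `σ^(k)(b) ≠ 0`; taking `ω = 0` there puts
every monomial in `A`. The polynomials are dense by Stone–Weierstrass, hence `A` is everything,
and a Tietze extension of `f` turns this into uniform approximation on `K`.
-/

open MeasureTheory RealInnerProductSpace

noncomputable section

/-- `Σ_d(σ)`: the linear span of the functions `x ↦ σ(ω·x + b)` on `ℝ^d`. -/
def SigmaSpan (d : ℕ) (σ : ℝ → ℝ) : Submodule ℝ (EuclideanSpace ℝ (Fin d) → ℝ) :=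
  Submodule.span ℝ {h : EuclideanSpace ℝ (Fin d) → ℝ |
    ∃ (ω : EuclideanSpace ℝ (Fin d)) (b : ℝ), h = fun x => σ (⟪ω, x⟫ + b)}

open Polynomial Nat in
theorem exists_polynomial_eq_of_iteratedDeriv_succ_eq_zero {f : ℝ → ℝ} {n : ℕ}
    (hf : ContDiff ℝ (n + 1) f) (h : iteratedDeriv (n + 1) f = 0) :
    ∃ P : ℝ[X], ∀ x, f x = P.eval x := by
  refine ⟨∑ k ∈ Finset.range (n + 1), C ((k ! : ℝ)⁻¹ * iteratedDeriv k f 0) * X ^ k, fun x => ?_⟩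
  rcases eq_or_ne x 0 with rfl | hx
  · simp [eval_finsetSum, Finset.sum_range_succ']
  obtain ⟨x', -, hx'⟩ := taylor_mean_remainder_lagrange_iteratedDeriv hx.symm hf.contDiffOn
  rw [h, Pi.zero_apply, zero_mul, zero_div, sub_eq_zero, taylor_within_apply] at hx'
  rw [hx', eval_finsetSum]
  refine Finset.sum_congr rfl fun k hk => ?_
  rw [iteratedDerivWithin_eq_iteratedDeriv (uniqueDiffOn_uIcc hx.symm) _ Set.left_mem_uIcc]
  · simp only [sub_zero, smul_eq_mul, eval_mul, eval_C, eval_pow, eval_X]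
    ring
  · exact hf.contDiffAt.of_le (by exact_mod_cast Finset.mem_range_succ_iff.1 hk |>.trans n.le_succ)

theorem exists_iteratedDeriv_ne_zero {σ : ℝ → ℝ} (hσ : ContDiff ℝ (⊤ : ℕ∞) σ)
    (hnp : ¬ ∃ P : Polynomial ℝ, ∀ t, σ t = P.eval t) (n : ℕ) : ∃ b, iteratedDeriv n σ b ≠ 0 := by
  by_contra! h
  have hsucc : iteratedDeriv (n + 1) σ = 0 := by
    rw [iteratedDeriv_succ, funext h, deriv_const']
    rfl
  exact hnp (exists_polynomial_eq_of_iteratedDeriv_succ_eq_zero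
    (hσ.of_le (by exact_mod_cast le_top)) hsucc)

theorem sub_eq_mul_integral_of_hasDerivAt {g g' : ℝ → ℝ} (hg : ∀ y, HasDerivAt g (g' y) y)
    (hg' : Continuous g') (y t v : ℝ) :
    g (y + t * v) - g y = t * ∫ s in (0 : ℝ)..1, v * g' (y + s * t * v) := by
  have hderiv : ∀ s ∈ Set.uIcc (0 : ℝ) 1,
      HasDerivAt (fun s => g (y + s * t * v)) (t * (v * g' (y + s * t * v))) s := fun s _ => by
    have := ((hasDerivAt_id s).mul_const t).mul_const v |>.const_add y
    exact ((hg _).comp s this).congr_deriv (by simp only [id]; ring)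
  rw [← intervalIntegral.integral_const_mul,
    intervalIntegral.integral_eq_sub_of_hasDerivAt hderiv
    (Continuous.intervalIntegrable (by fun_prop) _ _)]
  simp

section ContinuousFunctions

variable {X : Type*} [TopologicalSpace X]

theorem mul_mul_comp_mem_of_hasDerivAt {A : Submodule ℝ C(X, ℝ)}
    (hA : IsClosed (A : Set C(X, ℝ))) {g g' : C(ℝ, ℝ)} (hg : ∀ y, HasDerivAt g (g' y) y)
    (c φ ψ : C(X, ℝ))
    (h : ∀ t : ℝ, c * g.comp (φ + t • ψ) ∈ A) : c * ψ * g'.comp φ ∈ A := by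
  -- `F t` is the difference quotient `t⁻¹ • (c * g.comp (φ + t • ψ) - c * g.comp φ)` for `t ≠ 0`
  -- and the claimed derivative for `t = 0`; the integral form makes it jointly continuous.
  let F : C(ℝ × X, ℝ) :=
    ⟨fun p => c p.2 * ∫ s in (0 : ℝ)..1, ψ p.2 * g' (φ p.2 + s * p.1 * ψ p.2), by fun_prop⟩
  have hF0 : F.curry 0 = c * ψ * g'.comp φ := by
    ext x
    simp [F, mul_assoc]
  have hF : ∀ t ≠ 0, F.curry t = t⁻¹ • (c * g.comp (φ + t • ψ) - c * g.comp φ) := by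
    intro t ht
    ext x
    have := sub_eq_mul_integral_of_hasDerivAt hg g'.continuous (φ x) t (ψ x)
    simp only [F, ContinuousMap.curry_apply, ContinuousMap.coe_mk, ContinuousMap.smul_apply,
      ContinuousMap.sub_apply, ContinuousMap.mul_apply, ContinuousMap.comp_apply,
      ContinuousMap.add_apply, smul_eq_mul, ← mul_sub, this]
    rw [mul_left_comm, inv_mul_cancel_left₀ ht]
  rw [← hF0]
  refine hA.mem_of_tendsto
    (F.curry.continuous.tendsto 0 |>.mono_left (nhdsWithin_le_nhds (s := {0}ᶜ))) ?_
  filter_upwards [self_mem_nhdsWithin] with t (ht : t ≠ 0)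
  rw [hF t ht]
  exact A.smul_mem _ (A.sub_mem (h t) (by simpa using h 0))

theorem ContinuousMap.mem_closure_iff_forall_isCompact {S : Set C(X, ℝ)} {f : C(X, ℝ)} :
    f ∈ closure S ↔ ∀ K, IsCompact K → ∀ ε > 0, ∃ g ∈ S, ∀ x ∈ K, dist (f x) (g x) < ε := by
  rw [mem_closure_iff_nhds_basis
    (nhds_basis_uniformity' Metric.uniformity_basis_dist.compactConvergenceUniformity)]
  exact ⟨fun h K hK ε hε => h (K, ε) ⟨hK, hε⟩, fun h _ ⟨hK, hε⟩ => h _ hK _ hε⟩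

theorem Subalgebra.dense_of_separatesPoints {A : Subalgebra ℝ C(X, ℝ)}
    (hA : A.SeparatesPoints) : Dense (A : Set C(X, ℝ)) := fun f => by
  refine ContinuousMap.mem_closure_iff_forall_isCompact.2 fun K hK ε hε => ?_
  obtain ⟨g, hg, hgf⟩ :=
    ContinuousMap.exists_mem_subalgebra_near_continuous_of_isCompact_of_separatesPoints hA f hK hε
  exact ⟨g, hg, fun x hx => by simpa [abs_sub_comm, Real.dist_eq] using hgf x hx⟩

end ContinuousFunctions

section Euclidean

variable {d : ℕ}

def affineForm (ω : EuclideanSpace ℝ (Fin d)) (b : ℝ) : C(EuclideanSpace ℝ (Fin d), ℝ) :=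
  ⟨fun x => ⟪ω, x⟫ + b, by fun_prop⟩

def coord (i : Fin d) : C(EuclideanSpace ℝ (Fin d), ℝ) :=
  ⟨fun x => x i, by fun_prop⟩

theorem affineForm_add_smul_single (ω : EuclideanSpace ℝ (Fin d)) (b : ℝ) (i : Fin d) (t : ℝ) :
    affineForm (ω + t • EuclideanSpace.single i 1) b = affineForm ω b + t • coord i := by
  ext x
  simp [affineForm, coord, inner_add_left, real_inner_smul_left,
    EuclideanSpace.inner_single_left]
  ring

theorem affineForm_zero (b : ℝ) : affineForm (0 : EuclideanSpace ℝ (Fin d)) b = .const _ b := by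
  ext x
  simp [affineForm]

def ridgeSpan (σ : C(ℝ, ℝ)) : Submodule ℝ C(EuclideanSpace ℝ (Fin d), ℝ) :=
  Submodule.span ℝ {f | ∃ ω b, f = σ.comp (affineForm ω b)}

theorem coe_mem_sigmaSpan_of_mem_ridgeSpan {σ : C(ℝ, ℝ)} {f : C(EuclideanSpace ℝ (Fin d), ℝ)}
    (hf : f ∈ ridgeSpan σ) : ⇑f ∈ SigmaSpan d σ := by
  refine (Submodule.span_le (p := (SigmaSpan d σ).comap (ContinuousMap.coeFnLinearMap ℝ))).2
    ?_ hf
  rintro _ ⟨ω, b, rfl⟩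
  exact Submodule.subset_span ⟨ω, b, rfl⟩

variable {A : Submodule ℝ C(EuclideanSpace ℝ (Fin d), ℝ)} {g : ℕ → C(ℝ, ℝ)}

theorem multiset_prod_mul_comp_affineForm_mem
    (hA : IsClosed (A : Set C(EuclideanSpace ℝ (Fin d), ℝ)))
    (hg : ∀ n y, HasDerivAt (g n) (g (n + 1) y) y) (h0 : ∀ ω b, (g 0).comp (affineForm ω b) ∈ A)
    {l : Multiset C(EuclideanSpace ℝ (Fin d), ℝ)} (hl : ∀ p ∈ l, p ∈ Set.range coord)
    (ω : EuclideanSpace ℝ (Fin d)) (b : ℝ) :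
    l.prod * (g (Multiset.card l)).comp (affineForm ω b) ∈ A := by
  induction l using Multiset.induction_on generalizing ω b with
  | empty => simpa using h0 ω b
  | cons p l ih =>
    obtain ⟨i, rfl⟩ := hl p (Multiset.mem_cons_self p l)
    have hl' : ∀ p ∈ l, p ∈ Set.range coord := fun p hp => hl p (Multiset.mem_cons_of_mem hp)
    rw [Multiset.prod_cons, Multiset.card_cons, mul_comm (coord i)]
    refine mul_mul_comp_mem_of_hasDerivAt hA (hg _) _ _ _ fun t => ?_
    rw [← affineForm_add_smul_single]
    exact ih hl' _ _

theorem adjoin_range_coord_le (hA : IsClosed (A : Set C(EuclideanSpace ℝ (Fin d), ℝ)))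
    (hg : ∀ n y, HasDerivAt (g n) (g (n + 1) y) y) (h0 : ∀ ω b, (g 0).comp (affineForm ω b) ∈ A)
    (hne : ∀ n, ∃ b, g n b ≠ 0) :
    Subalgebra.toSubmodule (Algebra.adjoin ℝ (Set.range coord)) ≤ A := by
  rw [Algebra.adjoin_eq_span, Submodule.span_le]
  intro p hp
  obtain ⟨l, hl, rfl⟩ := Submonoid.exists_multiset_of_mem_closure hp
  obtain ⟨b, hb⟩ := hne (Multiset.card l)
  have hscale : (g l.card b)⁻¹ • (l.prod * (g l.card).comp (affineForm 0 b)) = l.prod := by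
    ext x
    simp [affineForm_zero, field]
  exact hscale ▸ A.smul_mem _ (multiset_prod_mul_comp_affineForm_mem hA hg h0 hl 0 b)

theorem dense_adjoin_range_coord :
    Dense (Algebra.adjoin ℝ (Set.range (coord (d := d))) : Set C(EuclideanSpace ℝ (Fin d), ℝ)) := by
  refine Subalgebra.dense_of_separatesPoints fun x y hxy => ?_
  obtain ⟨i, hi⟩ : ∃ i, x i ≠ y i := by
    by_contra! h
    exact hxy (PiLp.ext h)
  exact ⟨coord i, ⟨coord i, Algebra.subset_adjoin ⟨i, rfl⟩, rfl⟩, hi⟩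

theorem dense_ridgeSpan {σ : ℝ → ℝ} (hσ : ContDiff ℝ (⊤ : ℕ∞) σ)
    (hnp : ¬ ∃ P : Polynomial ℝ, ∀ t, σ t = P.eval t) :
    Dense (ridgeSpan (d := d) ⟨σ, hσ.continuous⟩ : Set C(EuclideanSpace ℝ (Fin d), ℝ)) := by
  let g : ℕ → C(ℝ, ℝ) := fun n =>
    ⟨iteratedDeriv n σ, hσ.continuous_iteratedDeriv n (by exact_mod_cast le_top)⟩
  have hg : ∀ n y, HasDerivAt (g n) (g (n + 1) y) y := fun n y => by
    simpa [g, iteratedDeriv_succ] using ((hσ.differentiable_iteratedDeriv n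
      (by exact_mod_cast ENat.natCast_lt_top n)) y).hasDerivAt
  have h0 : ∀ ω b, (g 0).comp (affineForm ω b) ∈
      (ridgeSpan (d := d) ⟨σ, hσ.continuous⟩).topologicalClosure :=
    fun ω b => Submodule.le_topologicalClosure _ (Submodule.subset_span ⟨ω, b, by ext; simp [g]⟩)
  have hle := adjoin_range_coord_le (ridgeSpan _).isClosed_topologicalClosure hg h0
    (exists_iteratedDeriv_ne_zero hσ hnp)
  exact dense_closure.1 (dense_adjoin_range_coord.mono hle)

end Euclidean

/-- Let `σ : ℝ → ℝ` be a `C^∞` function that is not a polynomial.  Then for every compact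
`K ⊆ ℝ^d`, `Σ_d(σ)` is dense in `C(K)` with the uniform norm, and in particular the
uniform closure of `Σ_d(σ)` on `K` contains all polynomials in `x₁, …, x_d`. -/
theorem span_dense_of_contDiff_not_polynomial (d : ℕ) (σ : ℝ → ℝ)
    (hσ : ContDiff ℝ (⊤ : ℕ∞) σ)
    (hnotpoly : ¬ ∃ P : Polynomial ℝ, ∀ t : ℝ, σ t = P.eval t)
    (K : Set (EuclideanSpace ℝ (Fin d))) (hK : IsCompact K) :
    (∀ f : EuclideanSpace ℝ (Fin d) → ℝ, ContinuousOn f K → ∀ ε : ℝ, 0 < ε →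
      ∃ g ∈ SigmaSpan d σ, ∀ x ∈ K, |f x - g x| < ε) ∧
    (∀ P : MvPolynomial (Fin d) ℝ, ∀ ε : ℝ, 0 < ε →
      ∃ g ∈ SigmaSpan d σ, ∀ x ∈ K,
        |MvPolynomial.eval (fun i => x i) P - g x| < ε) := by
  have approx : ∀ f : EuclideanSpace ℝ (Fin d) → ℝ, ContinuousOn f K → ∀ ε : ℝ, 0 < ε →
      ∃ g ∈ SigmaSpan d σ, ∀ x ∈ K, |f x - g x| < ε := by
    intro f hf ε hε
    obtain ⟨F, hF⟩ :=
      ContinuousMap.exists_restrict_eq hK.isClosed ⟨K.domRestrict f, hf.domRestrict⟩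
    obtain ⟨G, hG, hFG⟩ :=
      ContinuousMap.mem_closure_iff_forall_isCompact.1 (dense_ridgeSpan hσ hnotpoly F) K hK ε hε
    have hGσ := coe_mem_sigmaSpan_of_mem_ridgeSpan hG
    rw [ContinuousMap.coe_mk] at hGσ
    refine ⟨G, hGσ, fun x hx => ?_⟩
    have hFx : F x = f x := DFunLike.congr_fun hF ⟨x, hx⟩
    simpa [← hFx, Real.dist_eq] using hFG x hx
  exact ⟨approx, fun P => approx _ (P.continuous_eval.comp (by fun_prop)).continuousOn⟩
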